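/- Let f : ℝ^d → ℝ be differentiable, α-strongly convex and β-smooth with minimizer x*. Let l be uniform on the unit sphere, and let x⁺ = argmin over h ∈ ℝ of f(x + h l) (exact line search along l from x). Then E[f(x⁺)] − f(x*) ≤ (1 − α/(βd))(f(x) − f(x*)). -/

import Mathlib

open MeasureTheory RealInnerProductSpace

/-!
Along a unit direction `l`, β-smoothness shows that the step `-⟪∇f x, l⟫ / β` already decreases
`f` by `⟪∇f x, l⟫² / (2β)`, so exact line search does at least as well. For a rotation-invariant
law of `l` on the unit sphere, `E ⟪v, l⟫² = ‖v‖² / d`: all unit vectors give the same value by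
invariance, and the values over an orthonormal basis add up to `E ‖l‖² = 1`. Hence
`E f(x⁺) ≤ f x - ‖∇f x‖² / (2βd)`, and the Polyak–Łojasiewicz inequality
`‖∇f x‖² ≥ 2α (f x - f x*)`, which follows from strong convexity, gives the contraction.
-/

section Descent

variable {E : Type*} [NormedAddCommGroup E] [InnerProductSpace ℝ E]

lemma le_sub_inner_sq_div_of_forall_le_line {f : E → ℝ} {x y g l : E} {β : ℝ} (hβ : 0 < β)
    (hsmooth : ∀ h, f (x + h) ≤ f x + ⟪g, h⟫ + β / 2 * ‖h‖ ^ 2) (hl : ‖l‖ = 1)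
    (hy : ∀ t : ℝ, f y ≤ f (x + t • l)) : f y ≤ f x - ⟪g, l⟫ ^ 2 / (2 * β) := by
  have hstep := (hy (-(⟪g, l⟫ / β))).trans (hsmooth _)
  rw [real_inner_smul_right, norm_smul, hl, mul_one, Real.norm_eq_abs, sq_abs] at hstep
  refine hstep.trans_eq ?_
  field_simp
  ring

lemma two_mul_sub_le_norm_sq_of_strongConvex {f : E → ℝ} {x g : E} {α : ℝ} (hα : 0 < α)
    (hsc : ∀ h, f x + ⟪g, h⟫ + α / 2 * ‖h‖ ^ 2 ≤ f (x + h)) (y : E) :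
    2 * α * (f x - f y) ≤ ‖g‖ ^ 2 := by
  have hy := hsc (y - x)
  rw [add_sub_cancel] at hy
  -- complete the square: `0 ≤ ‖α (y - x) + g‖²`
  have hsq : ‖α • (y - x) + g‖ ^ 2 = α ^ 2 * ‖y - x‖ ^ 2 + 2 * (α * ⟪g, y - x⟫) + ‖g‖ ^ 2 := by
    rw [norm_add_sq_real, real_inner_smul_left, real_inner_comm, norm_smul, Real.norm_eq_abs,
      abs_of_pos hα, mul_pow]
  nlinarith [sq_nonneg ‖α • (y - x) + g‖]

end Descent

section RandomDirection

variable {E : Type*} [NormedAddCommGroup E] [InnerProductSpace ℝ E] [MeasurableSpace E]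
  [BorelSpace E] {μ : Measure E}

lemma integrable_inner_sq_of_ae_norm_eq_one [IsFiniteMeasure μ] (hae : ∀ᵐ l ∂μ, ‖l‖ = 1)
    (v : E) : Integrable (fun l ↦ ⟪v, l⟫ ^ 2) μ := by
  refine (integrable_const (‖v‖ ^ 2)).mono' (by fun_prop) ?_
  filter_upwards [hae] with l hl
  have hle : |⟪v, l⟫| ≤ ‖v‖ := by simpa [hl] using abs_real_inner_le_norm v l
  rw [Real.norm_eq_abs, abs_pow]
  exact pow_le_pow_left₀ (abs_nonneg _) hle 2

lemma integral_inner_sq_eq_of_norm_eq (hinv : ∀ R : E ≃ₗᵢ[ℝ] E, μ.map R = μ) {u v : E}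
    (huv : ‖u‖ = ‖v‖) : ∫ l, ⟪u, l⟫ ^ 2 ∂μ = ∫ l, ⟪v, l⟫ ^ 2 ∂μ := by
  -- the reflection in the hyperplane orthogonal to `v - u` swaps `u` and `v`
  set R : E ≃ₗᵢ[ℝ] E := Submodule.reflection (ℝ ∙ (v - u))ᗮ
  have hRv : R v = u := Submodule.reflection_sub huv.symm
  calc ∫ l, ⟪u, l⟫ ^ 2 ∂μ = ∫ l, ⟪u, l⟫ ^ 2 ∂μ.map R := by rw [hinv R]
    _ = ∫ l, ⟪R v, R l⟫ ^ 2 ∂μ := by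
      rw [integral_map R.continuous.aemeasurable (by fun_prop), hRv]
    _ = ∫ l, ⟪v, l⟫ ^ 2 ∂μ := by simp_rw [R.inner_map_map]

lemma integral_inner_sq_eq_norm_sq_div_finrank [FiniteDimensional ℝ E] [IsProbabilityMeasure μ]
    (hae : ∀ᵐ l ∂μ, ‖l‖ = 1) (hinv : ∀ R : E ≃ₗᵢ[ℝ] E, μ.map R = μ) (v : E) :
    ∫ l, ⟪v, l⟫ ^ 2 ∂μ = ‖v‖ ^ 2 / Module.finrank ℝ E := by
  set b := stdOrthonormalBasis ℝ E
  have hbasis : ∀ i, ∫ l, ⟪v, l⟫ ^ 2 ∂μ = ‖v‖ ^ 2 * ∫ l, ⟪b i, l⟫ ^ 2 ∂μ := fun i ↦ by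
    rw [integral_inner_sq_eq_of_norm_eq hinv (v := ‖v‖ • b i) (by simp [norm_smul]),
      ← integral_const_mul]
    simp_rw [real_inner_smul_left, mul_pow]
  have hsum : ∑ i, ∫ l, ⟪b i, l⟫ ^ 2 ∂μ = 1 := by
    rw [← integral_finsetSum _ fun i _ ↦ integrable_inner_sq_of_ae_norm_eq_one hae _,
      integral_congr_ae (g := fun _ ↦ 1), integral_const, probReal_univ, one_smul]
    filter_upwards [hae] with l hl
    rw [b.sum_sq_inner_right, hl, one_pow]
  have hcard : Module.finrank ℝ E * ∫ l, ⟪v, l⟫ ^ 2 ∂μ = ‖v‖ ^ 2 := by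
    calc Module.finrank ℝ E * ∫ l, ⟪v, l⟫ ^ 2 ∂μ = ∑ i, ∫ l, ⟪v, l⟫ ^ 2 ∂μ := by simp
      _ = ∑ i, ‖v‖ ^ 2 * ∫ l, ⟪b i, l⟫ ^ 2 ∂μ := Finset.sum_congr rfl fun i _ ↦ hbasis i
      _ = ‖v‖ ^ 2 := by rw [← Finset.mul_sum, hsum, mul_one]
  rcases eq_or_ne (Module.finrank ℝ E) 0 with hE | hE
  · have : Subsingleton E := Module.finrank_zero_iff.1 hE
    simp [Subsingleton.elim v 0]
  · rw [← hcard]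
    field_simp

lemma integral_le_sub_norm_sq_div_of_forall_le_line [FiniteDimensional ℝ E]
    [IsProbabilityMeasure μ] (hae : ∀ᵐ l ∂μ, ‖l‖ = 1) (hinv : ∀ R : E ≃ₗᵢ[ℝ] E, μ.map R = μ)
    {f : E → ℝ} {x g : E} {β : ℝ} (hβ : 0 < β)
    (hsmooth : ∀ h, f (x + h) ≤ f x + ⟪g, h⟫ + β / 2 * ‖h‖ ^ 2) {xplus : E → E}
    (hopt : ∀ l, ‖l‖ = 1 → ∀ t : ℝ, f (xplus l) ≤ f (x + t • l))
    (hint : Integrable (fun l ↦ f (xplus l)) μ) :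
    ∫ l, f (xplus l) ∂μ ≤ f x - ‖g‖ ^ 2 / (2 * β * Module.finrank ℝ E) := by
  have hint_sq := (integrable_inner_sq_of_ae_norm_eq_one hae g).div_const (2 * β)
  calc ∫ l, f (xplus l) ∂μ ≤ ∫ l, (f x - ⟪g, l⟫ ^ 2 / (2 * β)) ∂μ :=
        integral_mono_ae hint ((integrable_const _).sub hint_sq) <| hae.mono fun l hl ↦
          le_sub_inner_sq_div_of_forall_le_line hβ hsmooth hl (hopt l hl)
    _ = f x - ‖g‖ ^ 2 / (2 * β * Module.finrank ℝ E) := by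
        rw [integral_sub (integrable_const _) hint_sq, integral_div,
          integral_inner_sq_eq_norm_sq_div_finrank hae hinv, integral_const, probReal_univ,
          one_smul, div_div, mul_comm]

end RandomDirection

theorem exact_line_search_expected_decrease_general (d : ℕ)
    (f : EuclideanSpace ℝ (Fin d) → ℝ) (α β : ℝ) (hα : 0 < α) (hβ : 0 < β)
    (hsc : ∀ x h : EuclideanSpace ℝ (Fin d),
      f x + ⟪gradient f x, h⟫ + α / 2 * ‖h‖ ^ 2 ≤ f (x + h))
    (hsmooth : ∀ x h : EuclideanSpace ℝ (Fin d),
      f (x + h) ≤ f x + ⟪gradient f x, h⟫ + β / 2 * ‖h‖ ^ 2)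
    (xstar : EuclideanSpace ℝ (Fin d))
    -- `μ` is the uniform distribution of the direction `l` on the unit sphere
    (μ : Measure (EuclideanSpace ℝ (Fin d))) [IsProbabilityMeasure μ]
    (hsphere : μ {l | ‖l‖ = 1} = 1)
    (hinv : ∀ R : EuclideanSpace ℝ (Fin d) ≃ₗᵢ[ℝ] EuclideanSpace ℝ (Fin d),
      μ.map R = μ)
    (x : EuclideanSpace ℝ (Fin d))
    -- `xplus l` is the exact line-search minimizer of `f` on the line through `x`
    -- with direction `l`
    (xplus : EuclideanSpace ℝ (Fin d) → EuclideanSpace ℝ (Fin d))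
    (hopt : ∀ l, ‖l‖ = 1 → ∀ h : ℝ, f (xplus l) ≤ f (x + h • l))
    (hint : Integrable (fun l => f (xplus l)) μ) :
    (∫ l, f (xplus l) ∂μ) - f xstar ≤ (1 - α / (β * d)) * (f x - f xstar) := by
  have hae : ∀ᵐ l ∂μ, ‖l‖ = 1 :=
    (mem_ae_iff_prob_eq_one (isClosed_eq continuous_norm continuous_const).measurableSet).2
      hsphere
  have hmean := integral_le_sub_norm_sq_div_of_forall_le_line hae hinv hβ (hsmooth x) hopt hint
  rw [finrank_euclideanSpace_fin] at hmean
  have hpl := two_mul_sub_le_norm_sq_of_strongConvex hα (hsc x) xstar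
  have hgap : α / (β * d) * (f x - f xstar) ≤ ‖gradient f x‖ ^ 2 / (2 * β * d) :=
    calc α / (β * d) * (f x - f xstar) = 2 * α * (f x - f xstar) / (2 * β * d) := by ring
      _ ≤ ‖gradient f x‖ ^ 2 / (2 * β * d) := div_le_div_of_nonneg_right hpl (by positivity)
  linarith

/-- Exact line search along a uniformly random direction on the unit sphere:
for an `α`-strongly convex and `β`-smooth function with minimizer `x*`, the exact
line-search point `x⁺` from `x` along a uniform random direction `l` satisfies
`E[f(x⁺)] − f(x*) ≤ (1 − α/(βd)) (f(x) − f(x*))`. -/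
theorem exact_line_search_expected_decrease (d : ℕ)
    (f : EuclideanSpace ℝ (Fin d) → ℝ) (α β : ℝ) (hα : 0 < α) (hβ : 0 < β)
    (hdiff : Differentiable ℝ f)
    (hsc : ∀ x h : EuclideanSpace ℝ (Fin d),
      f x + ⟪gradient f x, h⟫ + α / 2 * ‖h‖ ^ 2 ≤ f (x + h))
    (hsmooth : ∀ x h : EuclideanSpace ℝ (Fin d),
      f (x + h) ≤ f x + ⟪gradient f x, h⟫ + β / 2 * ‖h‖ ^ 2)
    (xstar : EuclideanSpace ℝ (Fin d)) (hmin : ∀ y, f xstar ≤ f y)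
    -- `μ` is the uniform distribution of the direction `l` on the unit sphere
    (μ : Measure (EuclideanSpace ℝ (Fin d))) [IsProbabilityMeasure μ]
    (hsphere : μ {l | ‖l‖ = 1} = 1)
    (hinv : ∀ R : EuclideanSpace ℝ (Fin d) ≃ₗᵢ[ℝ] EuclideanSpace ℝ (Fin d),
      μ.map R = μ)
    (x : EuclideanSpace ℝ (Fin d))
    -- `xplus l` is the exact line-search minimizer of `f` on the line through `x`
    -- with direction `l`
    (xplus : EuclideanSpace ℝ (Fin d) → EuclideanSpace ℝ (Fin d))
    (hline : ∀ l, ‖l‖ = 1 → ∃ h : ℝ, xplus l = x + h • l)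
    (hopt : ∀ l, ‖l‖ = 1 → ∀ h : ℝ, f (xplus l) ≤ f (x + h • l))
    (hint : Integrable (fun l => f (xplus l)) μ) :
    (∫ l, f (xplus l) ∂μ) - f xstar ≤ (1 - α / (β * d)) * (f x - f xstar) :=
  exact_line_search_expected_decrease_general d f α β hα hβ hsc hsmooth xstar μ hsphere hinv x xplus
    hopt hint
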